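/- For λ = (λ_1,…,λ_n) in the open scalar domain D_f°(ℂ) = {λ : Σ_{|α|≥1} a_α |λ_α|² < 1}, the vector z_λ := Σ_{β∈F_n^+} √(b_β) λ̄_β e_β lies in F²(H_n), with ‖z_λ‖² = 1/(1 − Σ_{|α|≥1} a_α |λ_α|²), and satisfies W_i* z_λ = λ̄_i z_λ for i = 1,…,n. Conversely, every joint eigenvector of W_1*,…,W_n* is a scalar multiple of some z_λ with λ ∈ D_f°(ℂ). -/

import Mathlib

open Filter Topology
open scoped ComplexConjugate ENNReal

namespace NCDomain

/-- Words in the free monoid `F_n^+` on `n` generators. -/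
abbrev Word (n : ℕ) := FreeMonoid (Fin n)

instance {n : ℕ} : DecidableEq (Word n) :=
  inferInstanceAs (DecidableEq (List (Fin n)))

/-- The length `|α|` of a word. -/
def wordLen {n : ℕ} (α : Word n) : ℕ := FreeMonoid.length α

/-- The coefficients `b_α`, defined by `b_{g_0} = 1` and, for `|α| ≥ 1`,
`b_α = Σ_{j=1}^{|α|} Σ_{γ_1⋯γ_j = α, |γ_i| ≥ 1} a_{γ_1}⋯a_{γ_j}`, the sum running over
all ordered factorizations of `α` into nonempty words. -/
noncomputable def bCoeff {n : ℕ} (a : Word n → ℝ) (α : Word n) : ℝ :=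
  if α = 1 then 1
  else ∑' L : {L : List (Word n) // L.prod = α ∧ ∀ w ∈ L, w ≠ 1}, (L.1.map a).prod

/-- `f = Σ_{|α|≥1} a_α X_α` is a positive regular free holomorphic function:
`a_{g_0} = 0`, `a_α ≥ 0`, `a_{g_i} > 0`, and
`limsup_{k→∞} (Σ_{|α|=k} |a_α|²)^{1/(2k)} < ∞`. -/
def PosRegular {n : ℕ} (a : Word n → ℝ) : Prop :=
  a 1 = 0 ∧ (∀ α, 0 ≤ a α) ∧ (∀ i : Fin n, 0 < a (FreeMonoid.of i)) ∧
    ∃ C : ℝ, ∀ᶠ k in atTop,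
      (∑' α : {β : Word n // wordLen β = k}, (a α.1) ^ 2) ≤ C ^ (2 * k)

/-- For a tuple `T` of operators and a word `α = g_{i_1}⋯g_{i_k}`,
the product `T_α = T_{i_1}⋯T_{i_k}` (and `T_{g_0} = I`). -/
noncomputable def opWord {n : ℕ} {H : Type*} [NormedAddCommGroup H] [NormedSpace ℂ H]
    (T : Fin n → H →L[ℂ] H) (α : Word n) : H →L[ℂ] H :=
  ((FreeMonoid.toList α).map T).prod

/-- The full Fock space `F²(H_n)`, realized as `ℓ²` over the free monoid. -/
abbrev Fock (n : ℕ) : Type := lp (fun _ : Word n => ℂ) 2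

/-- The canonical orthonormal basis vector `e_α` of the Fock space. -/
noncomputable def fockBasis {n : ℕ} (α : Word n) : Fock n := lp.single 2 α (1 : ℂ)

/-- `W` is the tuple of weighted left creation operators associated with `f = Σ a_α X_α`:
`W_i e_α = √(b_α / b_{g_i α}) e_{g_i α}`. -/
def IsWeightedShift {n : ℕ} (a : Word n → ℝ) (W : Fin n → Fock n →L[ℂ] Fock n) : Prop :=
  ∀ (i : Fin n) (α : Word n),
    W i (fockBasis α) =
      (Real.sqrt (bCoeff a α / bCoeff a (FreeMonoid.of i * α)) : ℂ) •
        fockBasis (FreeMonoid.of i * α)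

/-- The scalar `λ_α = λ_{i_1}⋯λ_{i_k}` for a word `α = g_{i_1}⋯g_{i_k}`. -/
noncomputable def lamWord {n : ℕ} (lam : Fin n → ℂ) (α : Word n) : ℂ :=
  ((FreeMonoid.toList α).map lam).prod

variable {n : ℕ}

lemma lamWord_one (lam : Fin n → ℂ) : lamWord lam 1 = 1 := rfl

lemma lamWord_mul (lam : Fin n → ℂ) (x y : Word n) :
    lamWord lam (x * y) = lamWord lam x * lamWord lam y := by
  simp [lamWord, FreeMonoid.toList_mul]

lemma lamWord_of (lam : Fin n → ℂ) (i : Fin n) : lamWord lam (FreeMonoid.of i) = lam i := by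
  simp [lamWord, FreeMonoid.toList_of]

lemma toList_injective : Function.Injective (FreeMonoid.toList (α := Fin n)) :=
  fun _ _ h => h

lemma toList_prod (L : List (Word n)) :
    FreeMonoid.toList L.prod = (L.map FreeMonoid.toList).flatten := by
  induction L with
  | nil => rfl
  | cons w L ih => simp [List.prod_cons, FreeMonoid.toList_mul, ih]

lemma ne_one_iff {w : Word n} : w ≠ 1 ↔ FreeMonoid.toList w ≠ [] := by
  constructor
  · intro h h'; exact h (toList_injective h')
  · intro h h'; exact h (by rw [h']; rfl)

lemma join_inj : ∀ {L M : List (List (Fin n))}, L.map List.length = M.map List.length →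
    L.flatten = M.flatten → L = M := by
  intro L
  induction L with
  | nil => intro M h _; cases M with
    | nil => rfl
    | cons _ _ => simp at h
  | cons x L ih =>
    intro M h hj
    cases M with
    | nil => simp at h
    | cons y M =>
      simp only [List.map_cons, List.cons.injEq] at h
      simp only [List.flatten_cons] at hj
      obtain ⟨hxy, hLM⟩ := List.append_inj hj h.1
      exact by rw [hxy, ih h.2 hLM]

/-- The type of factorizations of `β` into nonempty words is finite. -/
instance factFinite (β : Word n) :
    Finite {L : List (Word n) // L.prod = β ∧ ∀ w ∈ L, w ≠ 1} := by
  have hinj : Function.Injective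
      (fun L : {L : List (Word n) // L.prod = β ∧ ∀ w ∈ L, w ≠ 1} =>
        (⟨L.1.map wordLen, by
            intro k hk
            simp only [List.mem_map] at hk
            obtain ⟨w, hw, rfl⟩ := hk
            have := L.2.2 w hw
            rw [ne_one_iff] at this
            exact List.length_pos_iff.2 this, by
            have h : (List.map wordLen L.1).sum = wordLen L.1.prod := by
              show _ = (FreeMonoid.toList L.1.prod).length
              rw [toList_prod, List.length_flatten, List.map_map]
              rfl
            rw [L.2.1] at h
            exact h⟩ : Composition (wordLen β))) := by
    rintro ⟨L, hL⟩ ⟨M, hM⟩ h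
    simp only [Composition.mk.injEq] at h
    have hlen : (L.map FreeMonoid.toList).map List.length = (M.map FreeMonoid.toList).map List.length := by
      rw [List.map_map, List.map_map]; exact h
    have hj : (L.map FreeMonoid.toList).flatten = (M.map FreeMonoid.toList).flatten := by
      rw [← toList_prod, ← toList_prod, hL.1, hM.1]
    have := join_inj hlen hj
    have : L = M := List.map_injective_iff.2 toList_injective this
    exact Subtype.ext this
  exact Finite.of_injective _ hinj

lemma bCoeff_one (a : Word n → ℝ) : bCoeff a 1 = 1 := if_pos rfl

lemma fact_one_eq (L : {L : List (Word n) // L.prod = 1 ∧ ∀ w ∈ L, w ≠ 1}) :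
    L.1 = [] := by
  obtain ⟨L, hp, hne⟩ := L
  cases L with
  | nil => rfl
  | cons w M =>
    exfalso
    have : FreeMonoid.toList ((w :: M).prod) = [] := by rw [hp]; rfl
    rw [toList_prod] at this
    simp only [List.map_cons, List.flatten_cons, List.append_eq_nil_iff] at this
    exact (ne_one_iff.1 (hne w (by simp))) this.1

lemma bCoeff_eq_tsum (a : Word n → ℝ) (β : Word n) :
    bCoeff a β = ∑' L : {L : List (Word n) // L.prod = β ∧ ∀ w ∈ L, w ≠ 1}, (L.1.map a).prod := by
  rw [bCoeff]
  split_ifs with h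
  · subst h
    have hne : Nonempty {L : List (Word n) // L.prod = 1 ∧ ∀ w ∈ L, w ≠ 1} :=
      ⟨⟨[], by simp, by simp⟩⟩
    have huniq : ∀ L : {L : List (Word n) // L.prod = 1 ∧ ∀ w ∈ L, w ≠ 1},
        L = ⟨[], by simp, by simp⟩ := fun L => Subtype.ext (fact_one_eq L)
    rw [tsum_eq_single ⟨[], by simp, by simp⟩ (fun b hb => absurd (huniq b) hb)]
    simp
  · rfl

lemma bCoeff_nonneg {a : Word n → ℝ} (ha : ∀ α, 0 ≤ a α) (β : Word n) :
    0 ≤ bCoeff a β := by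
  rw [bCoeff_eq_tsum]
  exact tsum_nonneg fun L => List.prod_nonneg (by
    intro x hx; simp only [List.mem_map] at hx; obtain ⟨w, _, rfl⟩ := hx; exact ha w)

lemma letters_prod (β : Word n) :
    ((FreeMonoid.toList β).map FreeMonoid.of).prod = β := by
  apply toList_injective
  rw [toList_prod, List.map_map]
  show ((FreeMonoid.toList β).map (fun x => [x])).flatten = FreeMonoid.toList β
  induction (FreeMonoid.toList β) with
  | nil => rfl
  | cons x l ih => simp only [List.map_cons, List.flatten_cons, List.singleton_append, ih]

lemma bCoeff_pos {a : Word n → ℝ} (ha : ∀ α, 0 ≤ a α) (hg : ∀ i, 0 < a (FreeMonoid.of i))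
    (β : Word n) : 0 < bCoeff a β := by
  rcases eq_or_ne β 1 with rfl | hβ
  · rw [bCoeff_one]; norm_num
  rw [bCoeff_eq_tsum]
  have : Fintype {L : List (Word n) // L.prod = β ∧ ∀ w ∈ L, w ≠ 1} := Fintype.ofFinite _
  rw [tsum_fintype]
  apply Finset.sum_pos'
  · intro L _
    exact List.prod_nonneg (by
      intro x hx; simp only [List.mem_map] at hx; obtain ⟨w, _, rfl⟩ := hx; exact ha w)
  · refine ⟨⟨(FreeMonoid.toList β).map FreeMonoid.of, by
      rw [letters_prod], by
      intro w hw
      simp only [List.mem_map] at hw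
      obtain ⟨i, _, rfl⟩ := hw
      rw [ne_one_iff, FreeMonoid.toList_of]
      simp⟩, Finset.mem_univ _, ?_⟩
    apply List.prod_pos
    intro x hx
    simp only [List.map_map, List.mem_map] at hx
    obtain ⟨i, _, rfl⟩ := hx
    exact hg i

section ENN
open ENNReal

lemma tsum_pi_fin {X : Type*} (t : X → ℝ≥0∞) :
    ∀ j : ℕ, ∑' u : Fin j → X, ∏ i, t (u i) = (∑' x, t x) ^ j := by
  intro j
  induction j with
  | zero =>
    rw [tsum_eq_single (fun i => i.elim0) (fun b hb => absurd (funext fun i => i.elim0) hb)]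
    simp
  | succ j ih =>
    rw [← (Fin.consEquiv (fun _ : Fin (j+1) => X)).tsum_eq (fun u => ∏ i, t (u i))]
    have : ∀ p : X × (Fin j → X),
        (∏ i, t (((Fin.consEquiv (fun _ : Fin (j+1) => X)) p) i)) = t p.1 * ∏ i, t (p.2 i) := by
      rintro ⟨x, v⟩
      simp only [Fin.consEquiv, Equiv.coe_fn_mk]
      rw [Fin.prod_univ_succ]
      simp
    rw [tsum_congr this, ENNReal.tsum_prod']
    calc ∑' x, ∑' v : Fin j → X, t x * ∏ i, t (v i)
        = ∑' x, t x * ∑' v : Fin j → X, ∏ i, t (v i) := by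
          exact tsum_congr fun x => ENNReal.tsum_mul_left
      _ = (∑' x, t x) * (∑' x, t x) ^ j := by rw [ih, ENNReal.tsum_mul_right]
      _ = (∑' x, t x) ^ (j + 1) := by ring

lemma tsum_list_enn {X : Type*} (t : X → ℝ≥0∞) :
    ∑' L : List X, (L.map t).prod = ∑' j : ℕ, (∑' x, t x) ^ j := by
  have h1 : ∀ L : List X, (L.map t).prod
      = ((List.ofFn (List.equivSigmaTuple L).2).map t).prod := by
    intro L
    simp [List.equivSigmaTuple, List.ofFn_get]
  rw [tsum_congr h1,
    (List.equivSigmaTuple (α := X)).tsum_eq (fun s : (j : ℕ) × (Fin j → X) => ((List.ofFn s.2).map t).prod),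
    ENNReal.tsum_sigma']
  refine tsum_congr fun j => ?_
  rw [← tsum_pi_fin t j]
  refine tsum_congr fun u => ?_
  rw [List.map_ofFn, List.prod_ofFn]
  rfl


noncomputable def listEquiv {n : ℕ} :
    List {γ : Word n // γ ≠ 1} ≃ {M : List (Word n) // ∀ w ∈ M, w ≠ 1} :=
  Equiv.ofBijective (fun L => ⟨L.map Subtype.val, by
      intro w hw
      simp only [List.mem_map] at hw
      obtain ⟨x, _, rfl⟩ := hw
      exact x.2⟩)
    ⟨by
      intro L M h
      exact List.map_injective_iff.2 Subtype.val_injective (congrArg Subtype.val h),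
     by
      rintro ⟨M, hM⟩
      refine ⟨M.attach.map (fun x => ⟨x.1, hM x.1 x.2⟩), ?_⟩
      apply Subtype.ext
      simp [List.map_map]⟩

def fibEquiv {n : ℕ} (β : Word n) :
    {M : {M : List (Word n) // ∀ w ∈ M, w ≠ 1} // M.1.prod = β}
      ≃ {L : List (Word n) // L.prod = β ∧ ∀ w ∈ L, w ≠ 1} :=
  ⟨fun M => ⟨M.1.1, M.2, M.1.2⟩, fun L => ⟨⟨L.1, L.2.2⟩, L.2.1⟩,
    fun M => by ext; rfl, fun L => by ext; rfl⟩

lemma keyA {n : ℕ} (T : Word n → ℝ≥0∞) :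
    ∑' β : Word n,
      ∑' M : {L : List (Word n) // L.prod = β ∧ ∀ w ∈ L, w ≠ 1}, (M.1.map T).prod
    = ∑' j : ℕ, (∑' x : {γ : Word n // γ ≠ 1}, T x.1) ^ j := by
  rw [← tsum_list_enn (fun x : {γ : Word n // γ ≠ 1} => T x.1)]
  have h1 : ∀ L : List {γ : Word n // γ ≠ 1},
      (L.map (fun x : {γ : Word n // γ ≠ 1} => T x.1)).prod
        = (((listEquiv L).1).map T).prod := by
    intro L
    simp [listEquiv, Equiv.ofBijective, List.map_map]
  rw [tsum_congr h1,
    listEquiv.tsum_eq (fun M : {M : List (Word n) // ∀ w ∈ M, w ≠ 1} => (M.1.map T).prod),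
    ← (Equiv.sigmaFiberEquiv (fun M : {M : List (Word n) // ∀ w ∈ M, w ≠ 1} => M.1.prod)).tsum_eq
      (fun M : {M : List (Word n) // ∀ w ∈ M, w ≠ 1} => (M.1.map T).prod),
    ENNReal.tsum_sigma']
  refine tsum_congr fun β => ?_
  rw [← (fibEquiv (n := n) β).tsum_eq
    (fun M : {L : List (Word n) // L.prod = β ∧ ∀ w ∈ L, w ≠ 1} => (M.1.map T).prod)]
  exact tsum_congr fun c => rfl


lemma prod_map_ofReal {n : ℕ} (q : Word n → ℝ) (hq : ∀ γ, 0 ≤ q γ) (l : List (Word n)) :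
    (l.map (fun γ => ENNReal.ofReal (q γ))).prod = ENNReal.ofReal ((l.map q).prod) := by
  induction l with
  | nil => simp
  | cons w l ih =>
    simp only [List.map_cons, List.prod_cons, ih]
    rw [ENNReal.ofReal_mul (hq w)]

lemma prod_map_q {n : ℕ} (a : Word n → ℝ) (lam : Fin n → ℂ) (l : List (Word n)) :
    (l.map (fun γ => a γ * ‖lamWord lam γ‖ ^ 2)).prod
      = (l.map a).prod * ‖lamWord lam l.prod‖ ^ 2 := by
  induction l with
  | nil => simp [lamWord_one]
  | cons w l ih =>
    simp only [List.map_cons, List.prod_cons, ih]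
    rw [lamWord_mul, norm_mul, mul_pow]
    ring

lemma fiber_eval {n : ℕ} (a : Word n → ℝ) (ha : ∀ γ, 0 ≤ a γ) (lam : Fin n → ℂ) (β : Word n) :
    ∑' M : {L : List (Word n) // L.prod = β ∧ ∀ w ∈ L, w ≠ 1},
      (M.1.map (fun γ => ENNReal.ofReal (a γ * ‖lamWord lam γ‖ ^ 2))).prod
    = ENNReal.ofReal (bCoeff a β * ‖lamWord lam β‖ ^ 2) := by
  have hq : ∀ γ : Word n, 0 ≤ a γ * ‖lamWord lam γ‖ ^ 2 :=
    fun γ => mul_nonneg (ha γ) (by positivity)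
  have hpa : ∀ l : List (Word n), 0 ≤ (l.map a).prod := fun l =>
    List.prod_nonneg (by
      intro x hx; simp only [List.mem_map] at hx; obtain ⟨w, _, rfl⟩ := hx; exact ha w)
  have : Fintype {L : List (Word n) // L.prod = β ∧ ∀ w ∈ L, w ≠ 1} := Fintype.ofFinite _
  rw [tsum_fintype]
  have hterm : ∀ M : {L : List (Word n) // L.prod = β ∧ ∀ w ∈ L, w ≠ 1},
      (M.1.map (fun γ => ENNReal.ofReal (a γ * ‖lamWord lam γ‖ ^ 2))).prod
        = ENNReal.ofReal ((M.1.map a).prod * ‖lamWord lam β‖ ^ 2) := by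
    intro M
    rw [prod_map_ofReal _ hq, prod_map_q, M.2.1]
  rw [Finset.sum_congr rfl (fun M _ => hterm M)]
  have : ∀ M : {L : List (Word n) // L.prod = β ∧ ∀ w ∈ L, w ≠ 1},
      ENNReal.ofReal ((M.1.map a).prod * ‖lamWord lam β‖ ^ 2)
        = ENNReal.ofReal ((M.1.map a).prod) * ENNReal.ofReal (‖lamWord lam β‖ ^ 2) :=
    fun M => ENNReal.ofReal_mul (hpa M.1)
  rw [Finset.sum_congr rfl (fun M _ => this M), ← Finset.sum_mul,
    ← ENNReal.ofReal_sum_of_nonneg (fun M _ => hpa M.1),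
    ← ENNReal.ofReal_mul (Finset.sum_nonneg (fun M _ => hpa M.1))]
  congr 1
  rw [bCoeff_eq_tsum, tsum_fintype]

lemma keyB {n : ℕ} (a : Word n → ℝ) (ha : ∀ γ, 0 ≤ a γ) (lam : Fin n → ℂ) :
    ∑' β : Word n, ENNReal.ofReal (bCoeff a β * ‖lamWord lam β‖ ^ 2)
    = ∑' j : ℕ,
        (∑' x : {γ : Word n // γ ≠ 1}, ENNReal.ofReal (a x.1 * ‖lamWord lam x.1‖ ^ 2)) ^ j := by
  rw [← keyA (fun γ => ENNReal.ofReal (a γ * ‖lamWord lam γ‖ ^ 2))]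
  exact tsum_congr fun β => (fiber_eval a ha lam β).symm


lemma part1_sum {n : ℕ} (a : Word n → ℝ) (ha : ∀ γ, 0 ≤ a γ) (lam : Fin n → ℂ)
    (hsum : Summable (fun α : {γ : Word n // γ ≠ 1} => a α.1 * ‖lamWord lam α.1‖ ^ 2))
    (hlt : (∑' α : {γ : Word n // γ ≠ 1}, a α.1 * ‖lamWord lam α.1‖ ^ 2) < 1) :
    Summable (fun β : Word n => bCoeff a β * ‖lamWord lam β‖ ^ 2) ∧
    (∑' β : Word n, bCoeff a β * ‖lamWord lam β‖ ^ 2)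
      = 1 / (1 - ∑' α : {γ : Word n // γ ≠ 1}, a α.1 * ‖lamWord lam α.1‖ ^ 2) := by
  set S := ∑' α : {γ : Word n // γ ≠ 1}, a α.1 * ‖lamWord lam α.1‖ ^ 2 with hS
  have hq : ∀ α : {γ : Word n // γ ≠ 1}, 0 ≤ a α.1 * ‖lamWord lam α.1‖ ^ 2 :=
    fun α => mul_nonneg (ha α.1) (by positivity)
  have hf : ∀ β : Word n, 0 ≤ bCoeff a β * ‖lamWord lam β‖ ^ 2 :=
    fun β => mul_nonneg (bCoeff_nonneg ha β) (by positivity)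
  have hS0 : 0 ≤ S := tsum_nonneg hq
  have hsE : (∑' α : {γ : Word n // γ ≠ 1}, ENNReal.ofReal (a α.1 * ‖lamWord lam α.1‖ ^ 2))
      = ENNReal.ofReal S := (ENNReal.ofReal_tsum_of_nonneg hq hsum).symm
  have hTE : (∑' β : Word n, ENNReal.ofReal (bCoeff a β * ‖lamWord lam β‖ ^ 2))
      = (1 - ENNReal.ofReal S)⁻¹ := by
    rw [keyB a ha lam, hsE, ENNReal.tsum_geometric]
  have hlt' : ENNReal.ofReal S < 1 := ENNReal.ofReal_lt_one.2 hlt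
  have hne : (1 - ENNReal.ofReal S)⁻¹ ≠ ⊤ := by
    rw [Ne, ENNReal.inv_eq_top, tsub_eq_zero_iff_le]
    exact not_le.2 hlt'
  have hsummable : Summable (fun β : Word n => bCoeff a β * ‖lamWord lam β‖ ^ 2) := by
    have := ENNReal.summable_toReal (by rw [hTE]; exact hne)
    simpa only [ENNReal.toReal_ofReal (hf _)] using this
  refine ⟨hsummable, ?_⟩
  have := ENNReal.tsum_toReal_eq
    (f := fun β : Word n => ENNReal.ofReal (bCoeff a β * ‖lamWord lam β‖ ^ 2))
    (fun β => ENNReal.ofReal_ne_top)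
  rw [hTE] at this
  have h2 : (∑' β : Word n, bCoeff a β * ‖lamWord lam β‖ ^ 2)
      = ((1 - ENNReal.ofReal S)⁻¹).toReal := by
    rw [this]
    exact tsum_congr fun β => (ENNReal.toReal_ofReal (hf β)).symm
  rw [h2, ENNReal.toReal_inv, ENNReal.toReal_sub_of_le hlt'.le ENNReal.one_ne_top,
    ENNReal.toReal_one, ENNReal.toReal_ofReal hS0, one_div]

lemma part2_sum {n : ℕ} (a : Word n → ℝ) (ha : ∀ γ, 0 ≤ a γ) (lam : Fin n → ℂ)
    (hsum : Summable (fun β : Word n => bCoeff a β * ‖lamWord lam β‖ ^ 2)) :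
    Summable (fun α : {γ : Word n // γ ≠ 1} => a α.1 * ‖lamWord lam α.1‖ ^ 2) ∧
    (∑' α : {γ : Word n // γ ≠ 1}, a α.1 * ‖lamWord lam α.1‖ ^ 2) < 1 := by
  have hq : ∀ α : {γ : Word n // γ ≠ 1}, 0 ≤ a α.1 * ‖lamWord lam α.1‖ ^ 2 :=
    fun α => mul_nonneg (ha α.1) (by positivity)
  have hf : ∀ β : Word n, 0 ≤ bCoeff a β * ‖lamWord lam β‖ ^ 2 :=
    fun β => mul_nonneg (bCoeff_nonneg ha β) (by positivity)
  set sE := ∑' α : {γ : Word n // γ ≠ 1}, ENNReal.ofReal (a α.1 * ‖lamWord lam α.1‖ ^ 2)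
    with hsEdef
  have hTE : (∑' β : Word n, ENNReal.ofReal (bCoeff a β * ‖lamWord lam β‖ ^ 2))
      = ∑' j : ℕ, sE ^ j := keyB a ha lam
  have hTne : (∑' β : Word n, ENNReal.ofReal (bCoeff a β * ‖lamWord lam β‖ ^ 2)) ≠ ⊤ := by
    rw [← ENNReal.ofReal_tsum_of_nonneg hf hsum]
    exact ENNReal.ofReal_ne_top
  have hsE1 : sE < 1 := by
    by_contra h
    push_neg at h
    have h1 : ∀ j : ℕ, (1 : ℝ≥0∞) ≤ sE ^ j := fun j => one_le_pow_of_one_le' h j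
    have : (⊤ : ℝ≥0∞) ≤ ∑' j : ℕ, sE ^ j := by
      rw [← ENNReal.tsum_const_eq_top_of_ne_zero (α := ℕ) (c := 1) one_ne_zero]
      exact ENNReal.tsum_le_tsum h1
    rw [← hTE] at this
    exact hTne (top_le_iff.1 this)
  have hsEne : sE ≠ ⊤ := hsE1.trans_le le_top |>.ne
  have hsum2 : Summable (fun α : {γ : Word n // γ ≠ 1} => a α.1 * ‖lamWord lam α.1‖ ^ 2) := by
    have := ENNReal.summable_toReal (f := fun α : {γ : Word n // γ ≠ 1} =>
      ENNReal.ofReal (a α.1 * ‖lamWord lam α.1‖ ^ 2)) (by rw [← hsEdef]; exact hsEne)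
    simpa only [ENNReal.toReal_ofReal (hq _)] using this
  refine ⟨hsum2, ?_⟩
  have h3 : (∑' α : {γ : Word n // γ ≠ 1}, a α.1 * ‖lamWord lam α.1‖ ^ 2) = sE.toReal := by
    rw [hsEdef, ENNReal.tsum_toReal_eq (fun α => ENNReal.ofReal_ne_top)]
    exact tsum_congr fun α => (ENNReal.toReal_ofReal (hq α)).symm
  rw [h3]
  have := (ENNReal.toReal_lt_toReal hsEne ENNReal.one_ne_top).2 hsE1
  simpa using this

end ENN

section Fock

variable {n : ℕ}

lemma coord_eq_inner (f : Fock n) (β : Word n) :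
    @inner ℂ _ _ (fockBasis β) f = f β := by
  rw [fockBasis, lp.inner_single_left]
  simp [RCLike.inner_apply]

lemma norm_sq_fock (z : Fock n) : ‖z‖ ^ 2 = ∑' β : Word n, ‖z β‖ ^ 2 := by
  have := lp.norm_rpow_eq_tsum (p := (2 : ℝ≥0∞)) (by norm_num) z
  simp only [show ((2 : ℝ≥0∞)).toReal = ((2 : ℕ) : ℝ) by norm_num, Real.rpow_natCast] at this
  exact this

lemma memℓp_two {f : ∀ _ : Word n, ℂ} (h : Summable fun β => ‖f β‖ ^ 2) :
    Memℓp f (2 : ℝ≥0∞) := by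
  apply memℓp_gen
  simpa only [show ((2 : ℝ≥0∞)).toReal = ((2 : ℕ) : ℝ) by norm_num, Real.rpow_natCast] using h

lemma summable_coords (z : Fock n) : Summable fun β : Word n => ‖z β‖ ^ 2 := by
  have := (lp.memℓp z).summable (p := (2 : ℝ≥0∞)) (by norm_num)
  simpa only [show ((2 : ℝ≥0∞)).toReal = ((2 : ℕ) : ℝ) by norm_num, Real.rpow_natCast] using this

lemma adjoint_coord {a : Word n → ℝ} {W : Fin n → Fock n →L[ℂ] Fock n}
    (hW : IsWeightedShift a W) (z : Fock n) (i : Fin n) (β : Word n) :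
    ((W i).adjoint z) β
      = (Real.sqrt (bCoeff a β / bCoeff a (FreeMonoid.of i * β)) : ℂ)
          * z (FreeMonoid.of i * β) := by
  rw [← coord_eq_inner, ContinuousLinearMap.adjoint_inner_right, hW i β, inner_smul_left,
    coord_eq_inner]
  simp [Complex.conj_ofReal]

end Fock


/-- for `λ ∈ D_f°(ℂ)` the vector `z_λ = Σ_β √(b_β) λ̄_β e_β` lies in
`F²(H_n)`, has `‖z_λ‖² = 1/(1 − Σ_{|α|≥1} a_α |λ_α|²)`, and satisfies
`W_i* z_λ = λ̄_i z_λ`; conversely every joint eigenvector of `W_1*, …, W_n*` is a scalar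
multiple of some `z_λ` with `λ ∈ D_f°(ℂ)`. -/
theorem eigenvectors_of_adjoint_shifts {n : ℕ} (a : Word n → ℝ) (hreg : PosRegular a)
    (W : Fin n → Fock n →L[ℂ] Fock n) (hW : IsWeightedShift a W) :
    (∀ lam : Fin n → ℂ,
      Summable (fun α : {γ : Word n // γ ≠ 1} => a α.1 * ‖lamWord lam α.1‖ ^ 2) →
      (∑' α : {γ : Word n // γ ≠ 1}, a α.1 * ‖lamWord lam α.1‖ ^ 2) < 1 →
      ∃ z : Fock n,
        (∀ β : Word n, z β = (Real.sqrt (bCoeff a β) : ℂ) * conj (lamWord lam β)) ∧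
        ‖z‖ ^ 2 = 1 / (1 - ∑' α : {γ : Word n // γ ≠ 1}, a α.1 * ‖lamWord lam α.1‖ ^ 2) ∧
        ∀ i : Fin n, (W i).adjoint z = conj (lam i) • z) ∧
    (∀ z : Fock n, z ≠ 0 → ∀ μ : Fin n → ℂ,
      (∀ i : Fin n, (W i).adjoint z = μ i • z) →
      ∃ lam : Fin n → ℂ,
        Summable (fun α : {γ : Word n // γ ≠ 1} => a α.1 * ‖lamWord lam α.1‖ ^ 2) ∧
        (∑' α : {γ : Word n // γ ≠ 1}, a α.1 * ‖lamWord lam α.1‖ ^ 2) < 1 ∧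
        ∃ c : ℂ, ∀ β : Word n,
          z β = c * ((Real.sqrt (bCoeff a β) : ℂ) * conj (lamWord lam β))) := by
  obtain ⟨ha1, ha, hg, -⟩ := hreg
  have hbpos : ∀ β, 0 < bCoeff a β := bCoeff_pos ha hg
  have hbnn : ∀ β, 0 ≤ bCoeff a β := bCoeff_nonneg ha
  constructor
  · -- forward direction
    intro lam hsum hlt
    obtain ⟨hsummable, hval⟩ := part1_sum a ha lam hsum hlt
    have hnorm : ∀ β : Word n, ‖(Real.sqrt (bCoeff a β) : ℂ) * conj (lamWord lam β)‖ ^ 2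
        = bCoeff a β * ‖lamWord lam β‖ ^ 2 := by
      intro β
      rw [norm_mul, RCLike.norm_conj, mul_pow, Complex.norm_real,
        Real.norm_eq_abs, abs_of_nonneg (Real.sqrt_nonneg _), Real.sq_sqrt (hbnn β)]
    refine ⟨⟨fun β => (Real.sqrt (bCoeff a β) : ℂ) * conj (lamWord lam β),
      memℓp_two (by simpa only [hnorm] using hsummable)⟩, fun β => rfl, ?_, ?_⟩
    · rw [norm_sq_fock]
      rw [show (∑' β : Word n, ‖(⟨fun β => (Real.sqrt (bCoeff a β) : ℂ) * conj (lamWord lam β),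
        memℓp_two (by simpa only [hnorm] using hsummable)⟩ : Fock n) β‖ ^ 2)
          = ∑' β : Word n, bCoeff a β * ‖lamWord lam β‖ ^ 2 from tsum_congr fun β => hnorm β]
      exact hval
    · intro i
      apply lp.ext
      funext β
      rw [adjoint_coord hW, lp.coeFn_smul, Pi.smul_apply, smul_eq_mul]
      show (Real.sqrt (bCoeff a β / bCoeff a (FreeMonoid.of i * β)) : ℂ)
          * ((Real.sqrt (bCoeff a (FreeMonoid.of i * β)) : ℂ)
            * conj (lamWord lam (FreeMonoid.of i * β)))
        = conj (lam i) * ((Real.sqrt (bCoeff a β) : ℂ) * conj (lamWord lam β))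
      have hsq : Real.sqrt (bCoeff a β / bCoeff a (FreeMonoid.of i * β))
          * Real.sqrt (bCoeff a (FreeMonoid.of i * β)) = Real.sqrt (bCoeff a β) := by
        rw [Real.sqrt_div (hbnn β)]
        have : Real.sqrt (bCoeff a (FreeMonoid.of i * β)) ≠ 0 :=
          (Real.sqrt_pos.2 (hbpos _)).ne'
        field_simp
      have hC : (Real.sqrt (bCoeff a β / bCoeff a (FreeMonoid.of i * β)) : ℂ)
          * (Real.sqrt (bCoeff a (FreeMonoid.of i * β)) : ℂ) = (Real.sqrt (bCoeff a β) : ℂ) := by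
        rw [← Complex.ofReal_mul, hsq]
      rw [lamWord_mul, lamWord_of, map_mul]
      linear_combination (conj (lam i) * conj (lamWord lam β)) * hC
  · -- converse direction
    intro z hz μ hμ
    have hco : ∀ (i : Fin n) (β : Word n),
        (Real.sqrt (bCoeff a β / bCoeff a (FreeMonoid.of i * β)) : ℂ)
          * z (FreeMonoid.of i * β) = μ i * z β := by
      intro i β
      have h1 : ((W i).adjoint z) β = (μ i • z) β := by rw [hμ i]
      rw [adjoint_coord hW, lp.coeFn_smul, Pi.smul_apply, smul_eq_mul] at h1
      exact h1
    have hkey : ∀ (i : Fin n) (β : Word n),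
        (Real.sqrt (bCoeff a β) : ℂ) * z (FreeMonoid.of i * β)
          = μ i * z β * (Real.sqrt (bCoeff a (FreeMonoid.of i * β)) : ℂ) := by
      intro i β
      have h := hco i β
      rw [Real.sqrt_div (hbnn β), Complex.ofReal_div] at h
      have hne : ((Real.sqrt (bCoeff a (FreeMonoid.of i * β)) : ℝ) : ℂ) ≠ 0 := by
        simpa using (Real.sqrt_pos.2 (hbpos _)).ne'
      field_simp at h
      linear_combination h
    have hz1 : ∀ l : List (Fin n), z (FreeMonoid.ofList l)
        = z 1 * (Real.sqrt (bCoeff a (FreeMonoid.ofList l)) : ℂ) * (l.map μ).prod := by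
      intro l
      induction l with
      | nil => simp [show FreeMonoid.ofList ([] : List (Fin n)) = 1 from rfl, bCoeff_one]
      | cons i l ih =>
        have key := hkey i (FreeMonoid.ofList l)
        rw [ih] at key
        have hne : ((Real.sqrt (bCoeff a (FreeMonoid.ofList l)) : ℝ) : ℂ) ≠ 0 := by
          simpa using (Real.sqrt_pos.2 (hbpos _)).ne'
        show z (FreeMonoid.of i * FreeMonoid.ofList l) = _
        apply mul_left_cancel₀ hne
        rw [key]
        show _ = (Real.sqrt (bCoeff a (FreeMonoid.ofList l)) : ℂ)
          * (z 1 * (Real.sqrt (bCoeff a (FreeMonoid.of i * FreeMonoid.ofList l)) : ℂ)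
              * ((i :: l).map μ).prod)
        rw [List.map_cons, List.prod_cons]
        ring
    have hz1ne : z 1 ≠ 0 := by
      intro h0
      apply hz
      apply lp.ext
      funext β
      have hβ := hz1 (FreeMonoid.toList β)
      rw [FreeMonoid.ofList_toList] at hβ
      rw [hβ, h0]
      simp
    set lam : Fin n → ℂ := fun i => conj (μ i) with hlam
    have hconj : ∀ β : Word n, conj (lamWord lam β)
        = ((FreeMonoid.toList β).map μ).prod := by
      intro β
      rw [lamWord, map_list_prod (starRingEnd ℂ), List.map_map]
      congr 1
      refine List.map_congr_left fun i _ => ?_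
      simp [hlam]
    have hzco : ∀ β : Word n,
        z β = z 1 * ((Real.sqrt (bCoeff a β) : ℂ) * conj (lamWord lam β)) := by
      intro β
      have hβ := hz1 (FreeMonoid.toList β)
      rw [FreeMonoid.ofList_toList] at hβ
      rw [hβ, hconj]
      ring
    have hsum0 : Summable (fun β : Word n => bCoeff a β * ‖lamWord lam β‖ ^ 2) := by
      have h1 := (summable_coords z).mul_right ((‖z 1‖ ^ 2)⁻¹)
      refine h1.congr fun β => ?_
      have hzn : ‖z 1‖ ≠ 0 := norm_ne_zero_iff.2 hz1ne
      rw [hzco β, norm_mul, norm_mul, RCLike.norm_conj, Complex.norm_real,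
        Real.norm_eq_abs, abs_of_nonneg (Real.sqrt_nonneg _), mul_pow, mul_pow,
        Real.sq_sqrt (hbnn β)]
      have hA : ‖z 1‖ ≠ 0 := by
        simpa using hzn
      field_simp
    obtain ⟨hs, hlt⟩ := part2_sum a ha lam hsum0
    exact ⟨lam, hs, hlt, z 1, fun β => hzco β⟩

end NCDomain
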